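/- The sequence of functions g_n defined by g_0(y) = 1 and g_n(y) = y·[g_{n-1}(y) + ((1-y)/m)·g_{n-1}'(y)] for n ≥ 1 satisfies g_n(y) = Σ_{k=1}^{n} (y^k / m^{n-k}) · (∏_{h=0}^{k-1} (1 - h/m)) · S(n,k), where S(n,k) denotes the Stirling number of the second kind. -/

import Mathlib

/-!
Writing `a = 1/m`, the recurrence is `g (n+1) = X (g n + a (1 - X) g n')`, a linear operator on
polynomials, so every `g n` is a polynomial. On its coefficients `c n k` the recurrence becomes
`c (n+1) (k+1) = (1 - k a) c n k + (k+1) a c n (k+1)`, and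
`c n k = a^(n-k) ∏_{h<k} (1 - h a) S(n,k)` solves this because of the
Stirling recurrence `S(n+1,k+1) = S(n,k) + (k+1) S(n,k+1)`.
-/

/-- Stirling numbers of the second kind. -/
def stirling2 : ℕ → ℕ → ℕ
  | 0, 0 => 1
  | 0, _ + 1 => 0
  | _ + 1, 0 => 0
  | n + 1, k + 1 => stirling2 n k + (k + 1) * stirling2 n (k + 1)

open Finset Polynomial

theorem stirling2_eq_stirlingSecond : stirling2 = Nat.stirlingSecond := by
  funext n k
  induction n generalizing k with
  | zero => cases k <;> rfl
  | succ n ih =>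
    cases k with
    | zero => rfl
    | succ k => rw [stirling2, Nat.stirlingSecond_succ_succ, ih, ih, add_comm]

theorem coeff_X_mul_derivative {R : Type*} [Semiring R] (p : R[X]) (k : ℕ) :
    (X * derivative p).coeff k = k * p.coeff k := by
  cases k with
  | zero => simp
  | succ k => rw [coeff_X_mul, coeff_derivative, ← Nat.cast_succ, Nat.cast_comm]

section CommRing

variable {R : Type*} [CommRing R] (a : R)

noncomputable def stirlingPoly : ℕ → R[X]
  | 0 => 1
  | n + 1 => X * (stirlingPoly n + C a * (1 - X) * derivative (stirlingPoly n))

def stirlingCoeff (n k : ℕ) : R :=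
  a ^ (n - k) * (∏ h ∈ range k, (1 - h * a)) * Nat.stirlingSecond n k

theorem coeff_stirlingPoly_succ_zero (n : ℕ) : (stirlingPoly a (n + 1)).coeff 0 = 0 :=
  coeff_X_mul_zero _

theorem coeff_stirlingPoly_succ_succ (n k : ℕ) :
    (stirlingPoly a (n + 1)).coeff (k + 1) =
      (1 - k * a) * (stirlingPoly a n).coeff k +
        (k + 1) * a * (stirlingPoly a n).coeff (k + 1) := by
  rw [stirlingPoly]
  set p := stirlingPoly a n
  have hsplit :
      p + C a * (1 - X) * derivative p = p + C a * derivative p - C a * (X * derivative p) := by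
    ring
  rw [coeff_X_mul, hsplit, coeff_sub, coeff_add, coeff_C_mul, coeff_C_mul,
    coeff_X_mul_derivative, coeff_derivative]
  ring

theorem stirlingCoeff_zero_right (n : ℕ) : stirlingCoeff a (n + 1) 0 = 0 := by
  simp [stirlingCoeff]

theorem stirlingCoeff_of_lt {n k : ℕ} (h : n < k) : stirlingCoeff a n k = 0 := by
  simp [stirlingCoeff, Nat.stirlingSecond_eq_zero_of_lt h]

theorem stirlingCoeff_succ_succ (n k : ℕ) :
    stirlingCoeff a (n + 1) (k + 1) =
      (1 - k * a) * stirlingCoeff a n k + (k + 1) * a * stirlingCoeff a n (k + 1) := by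
  have hprod :
      ∏ h ∈ range (k + 1), (1 - h * a) = (∏ h ∈ range k, (1 - h * a)) * (1 - k * a) :=
    prod_range_succ _ k
  rcases lt_or_ge n (k + 1) with hlt | hle
  · have hn : n - k = 0 := by omega
    simp only [stirlingCoeff, Nat.stirlingSecond_succ_succ, Nat.stirlingSecond_eq_zero_of_lt hlt,
      hprod, Nat.add_sub_add_right, hn]
    push_cast
    ring
  · obtain ⟨d, rfl⟩ := Nat.exists_eq_add_of_le hle
    simp only [stirlingCoeff, Nat.stirlingSecond_succ_succ, hprod, Nat.add_sub_add_right,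
      show k + 1 + d - k = d + 1 by omega, Nat.add_sub_cancel_left]
    push_cast
    ring

theorem coeff_stirlingPoly (n k : ℕ) : (stirlingPoly a n).coeff k = stirlingCoeff a n k := by
  induction n generalizing k with
  | zero => cases k <;> simp [stirlingPoly, stirlingCoeff, coeff_one]
  | succ n ih =>
    cases k with
    | zero => rw [coeff_stirlingPoly_succ_zero, stirlingCoeff_zero_right]
    | succ k => rw [coeff_stirlingPoly_succ_succ, stirlingCoeff_succ_succ, ih, ih]

theorem eval_stirlingPoly (n : ℕ) (x : R) :
    (stirlingPoly a n).eval x = ∑ k ∈ range (n + 1), stirlingCoeff a n k * x ^ k := by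
  have hdeg : (stirlingPoly a n).natDegree < n + 1 :=
    Nat.lt_succ_of_le <| natDegree_le_iff_coeff_eq_zero.2 fun k hk => by
      rw [coeff_stirlingPoly, stirlingCoeff_of_lt a hk]
  simp only [eval_eq_sum_range' hdeg, coeff_stirlingPoly]

end CommRing

theorem eq_eval_stirlingPoly {𝕜 : Type*} [NontriviallyNormedField 𝕜] {a : 𝕜}
    {g : ℕ → 𝕜 → 𝕜} (h0 : ∀ y, g 0 y = 1)
    (hsucc : ∀ n y, g (n + 1) y = y * (g n y + a * (1 - y) * deriv (g n) y))
    (n : ℕ) (y : 𝕜) :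
    g n y = (stirlingPoly a n).eval y := by
  induction n generalizing y with
  | zero => rw [h0, stirlingPoly, eval_one]
  | succ n ih =>
    rw [hsucc, funext ih, Polynomial.deriv, stirlingPoly]
    simp only [eval_mul, eval_X, eval_add, eval_C, eval_sub, eval_one]

theorem recurrence_solution_stirling_general (m : ℕ) (g : ℕ → ℝ → ℝ)
    (h0 : ∀ y, g 0 y = 1)
    (hrec : ∀ n : ℕ, 1 ≤ n → ∀ y : ℝ,
      g n y = y * (g (n - 1) y + (1 - y) / m * deriv (g (n - 1)) y)) :
    ∀ n : ℕ, 1 ≤ n → ∀ y : ℝ,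
      g n y = ∑ k ∈ Finset.Icc 1 n,
        y ^ k / (m : ℝ) ^ (n - k) *
          (∏ h ∈ Finset.range k, (1 - (h : ℝ) / m)) * (stirling2 n k : ℝ) := by
  have hsucc : ∀ n y, g (n + 1) y = y * (g n y + (m : ℝ)⁻¹ * (1 - y) * deriv (g n) y) := by
    intro n y
    rw [hrec (n + 1) n.succ_pos y, Nat.add_sub_cancel, div_eq_inv_mul]
  intro n hn y
  obtain ⟨n, rfl⟩ := Nat.exists_eq_add_of_le' hn
  rw [eq_eval_stirlingPoly h0 hsucc, eval_stirlingPoly, sum_range_succ', stirlingCoeff_zero_right,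
    zero_mul, add_zero, ← Ico_add_one_right_eq_Icc, sum_Ico_eq_sum_range, Nat.add_sub_cancel]
  refine sum_congr rfl fun k _ => ?_
  simp only [stirlingCoeff, stirling2_eq_stirlingSecond, div_eq_mul_inv, inv_pow, add_comm 1 k]
  ring

theorem recurrence_solution_stirling (m : ℕ) (hm : 1 ≤ m) (g : ℕ → ℝ → ℝ)
    (h0 : ∀ y, g 0 y = 1)
    (hrec : ∀ n : ℕ, 1 ≤ n → ∀ y : ℝ,
      g n y = y * (g (n - 1) y + (1 - y) / m * deriv (g (n - 1)) y)) :
    ∀ n : ℕ, 1 ≤ n → ∀ y : ℝ,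
      g n y = ∑ k ∈ Finset.Icc 1 n,
        y ^ k / (m : ℝ) ^ (n - k) *
          (∏ h ∈ Finset.range k, (1 - (h : ℝ) / m)) * (stirling2 n k : ℝ) :=
  recurrence_solution_stirling_general m g h0 hrec
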